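/- The Lobachevsky function Л(θ) = −∫₀^θ log|2 sin t| dt is well defined for every real θ (the integrand t ↦ log|2 sin t| is interval-integrable on [0,θ] for every θ ∈ ℝ), and Л is continuous on all of ℝ. -/

import Mathlib

open Real MeasureTheory

/-- The Lobachevsky function `Л(θ) = −∫₀^θ log |2 sin t| dt`. -/
noncomputable def lobachevsky (θ : ℝ) : ℝ := -∫ t in (0 : ℝ)..θ, Real.log |2 * Real.sin t|

lemma intervalIntegrable_log_abs_two_mul_sin (a b : ℝ) :
    IntervalIntegrable (fun t : ℝ => Real.log |2 * Real.sin t|) volume a b :=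
  (analyticOnNhd_const.mul analyticOnNhd_sin).meromorphicOn.intervalIntegrable_log_norm

/-- The Lobachevsky function is well defined for every real `θ`
(the integrand `t ↦ log |2 sin t|` is interval-integrable on `[0,θ]` for every `θ`),
and `Л` is continuous on all of `ℝ`. -/
theorem lobachevsky_integrable_and_continuous :
    (∀ θ : ℝ, IntervalIntegrable (fun t : ℝ => Real.log |2 * Real.sin t|)
      MeasureTheory.volume 0 θ) ∧
    Continuous lobachevsky :=
  ⟨intervalIntegrable_log_abs_two_mul_sin 0,
    (intervalIntegral.continuous_primitive intervalIntegrable_log_abs_two_mul_sin 0).neg⟩
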